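/- Let A = (a_{ij}) be an n×n matrix over ℤ with a_{ii} = 0 for all i, and fix 1 ≤ k ≤ n. Define U = I_n − 2E_{kk} + Σ_{j : a_{kj} ≤ 0} |a_{kj}| E_{kj} and W = I_n − 2E_{kk} + Σ_{i : a_{ik} ≥ 0} a_{ik} E_{ik}, where E_{ij} denotes the matrix unit with 1 in position (i,j) and 0 elsewhere. Then the Fomin–Zelevinsky mutation of A in direction k satisfies μ_k(A) = W·A·U. -/

import Mathlib

noncomputable section

namespace MeshMut

variable {ι : Type} [Fintype ι] [DecidableEq ι]

/-- The Fomin–Zelevinsky mutation of a square integer matrix `A` in direction `k`. -/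
def fzMutation (A : Matrix ι ι ℤ) (k : ι) : Matrix ι ι ℤ := fun i j =>
  if i = k ∨ j = k then -A i j
  else A i j + (|A i k| * A k j + A i k * |A k j|) / 2

/-- `U = I − 2·E_{kk} + ∑_{j : a_{kj} ≤ 0} |a_{kj}|·E_{kj}`. -/
def mutU (A : Matrix ι ι ℤ) (k : ι) : Matrix ι ι ℤ :=
  1 - Matrix.single k k (2 : ℤ) +
    ∑ j ∈ Finset.univ.filter (fun j => A k j ≤ 0), Matrix.single k j |A k j|

/-- `W = I − 2·E_{kk} + ∑_{i : a_{ik} ≥ 0} a_{ik}·E_{ik}`. -/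
def mutW (A : Matrix ι ι ℤ) (k : ι) : Matrix ι ι ℤ :=
  1 - Matrix.single k k (2 : ℤ) +
    ∑ i ∈ Finset.univ.filter (fun i => 0 ≤ A i k), Matrix.single i k (A i k)

end MeshMut

/-!
Both `W` and `U` are rank-one perturbations of the identity supported on column, respectively
row, `k`: `W = 1 + v eₖᵀ` with `v = (A·ₖ)⁺ - 2eₖ` and `U = 1 + eₖ uᵀ` with `u = (Aₖ·)⁻ - 2eₖ`.
Hence `W A U = A + v Aₖ· + A·ₖ uᵀ + aₖₖ v uᵀ`, and the last term vanishes since `aₖₖ = 0`.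
Off row and column `k` the entry is `aᵢⱼ + aᵢₖ⁺ aₖⱼ + aᵢₖ aₖⱼ⁻`, which is the Fomin–Zelevinsky
correction `(|aᵢₖ| aₖⱼ + aᵢₖ |aₖⱼ|) / 2` by a sign case split; on row and column `k` the
`-2eₖ` parts flip the sign.
-/

lemma Int.abs_mul_add_mul_abs_ediv_two (x y : ℤ) :
    (|x| * y + x * |y|) / 2 = x⁺ * y + x * y⁻ := by
  rcases le_total 0 x with hx | hx <;> rcases le_total 0 y with hy | hy
  · rw [abs_of_nonneg hx, abs_of_nonneg hy, posPart_eq_self.2 hx, negPart_eq_zero.2 hy]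
    omega
  · rw [abs_of_nonneg hx, abs_of_nonpos hy, posPart_eq_self.2 hx, negPart_eq_neg.2 hy]
    simp
  · rw [abs_of_nonpos hx, abs_of_nonneg hy, posPart_eq_zero.2 hx, negPart_eq_zero.2 hy]
    simp
  · rw [abs_of_nonpos hx, abs_of_nonpos hy, posPart_eq_zero.2 hx, negPart_eq_neg.2 hy,
      show -x * y + x * -y = 2 * (x * -y) by ring]
    omega

namespace Matrix

variable {ι R : Type*} [DecidableEq ι]

section Semiring

variable [Semiring R]

theorem single_eq_vecMulVec_single_left (i j : ι) (c : R) :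
    single i j c = vecMulVec (Pi.single i c) (Pi.single j 1) := by
  ext a b
  rcases eq_or_ne i a with rfl | ha <;> rcases eq_or_ne j b with rfl | hb <;>
    simp_all [vecMulVec_apply]

theorem single_eq_vecMulVec_single_right (i j : ι) (c : R) :
    single i j c = vecMulVec (Pi.single i 1) (Pi.single j c) := by
  ext a b
  rcases eq_or_ne i a with rfl | ha <;> rcases eq_or_ne j b with rfl | hb <;>
    simp_all [vecMulVec_apply]

variable [Fintype ι]

theorem sum_single_col_eq_vecMulVec (f : ι → R) (k : ι) :
    ∑ i, single i k (f i) = vecMulVec f (Pi.single k 1) := by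
  ext a b
  simp [Matrix.sum_apply, single_apply, vecMulVec_apply, Pi.single_apply, ite_and, eq_comm]

theorem sum_single_row_eq_vecMulVec (k : ι) (f : ι → R) :
    ∑ j, single k j (f j) = vecMulVec (Pi.single k 1) f := by
  ext a b
  simp [Matrix.sum_apply, single_apply, vecMulVec_apply, Pi.single_apply, ite_and, eq_comm]

end Semiring

theorem one_add_vecMulVec_single_mul_mul_one_add_vecMulVec_single [Fintype ι] [CommSemiring R]
    (A : Matrix ι ι R) (k : ι) (v u : ι → R) :
    (1 + vecMulVec v (Pi.single k 1)) * A * (1 + vecMulVec (Pi.single k 1) u) =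
      A + vecMulVec v (A.row k) + vecMulVec (A.col k) u + A k k • vecMulVec v u := by
  simp only [add_mul, mul_add, one_mul, mul_one, vecMulVec_mul, mul_vecMulVec, single_one_vecMul,
    mulVec_single_one]
  ext i j
  simp only [Matrix.add_apply, vecMulVec_apply, row_apply, col_apply, smul_apply, smul_eq_mul]
  ring

end Matrix

open Matrix

namespace MeshMut

variable {ι : Type} [Fintype ι] [DecidableEq ι]

theorem mutW_eq (A : Matrix ι ι ℤ) (k : ι) :
    mutW A k = 1 + vecMulVec ((A.col k)⁺ - Pi.single k 2) (Pi.single k 1) := by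
  have hpos (i : ι) :
      (if 0 ≤ A i k then single i k (A i k) else 0) = single i k ((A.col k)⁺ i) := by
    rw [Pi.posPart_apply, posPart_eq_ite, apply_ite (single i k), single_zero, col_apply]
  rw [mutW, Finset.sum_filter, Finset.sum_congr rfl fun i _ => hpos i, sum_single_col_eq_vecMulVec,
    single_eq_vecMulVec_single_left, sub_vecMulVec]
  abel

theorem mutU_eq (A : Matrix ι ι ℤ) (k : ι) :
    mutU A k = 1 + vecMulVec (Pi.single k 1) ((A.row k)⁻ - Pi.single k 2) := by
  have hneg (j : ι) :
      (if A k j ≤ 0 then single k j |A k j| else 0) = single k j ((A.row k)⁻ j) := by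
    rw [Pi.negPart_apply, negPart_eq_ite, apply_ite (single k j), single_zero, row_apply]
    split_ifs with h
    · rw [abs_of_nonpos h]
    · rfl
  rw [mutU, Finset.sum_filter, Finset.sum_congr rfl fun j _ => hneg j, sum_single_row_eq_vecMulVec,
    single_eq_vecMulVec_single_right, vecMulVec_sub]
  abel

theorem fzMutation_eq_mutW_mul_mul_mutU (A : Matrix ι ι ℤ) (hdiag : ∀ i, A i i = 0) (k : ι) :
    fzMutation A k = mutW A k * A * mutU A k := by
  rw [mutW_eq, mutU_eq, one_add_vecMulVec_single_mul_mul_one_add_vecMulVec_single, hdiag k,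
    zero_smul, add_zero]
  ext i j
  simp only [fzMutation, Matrix.add_apply, vecMulVec_apply, row_apply, col_apply, Pi.sub_apply,
    Pi.posPart_apply, Pi.negPart_apply, Pi.single_apply]
  by_cases hi : i = k
  · subst hi
    simp only [true_or, if_true, hdiag, posPart_zero]
    ring
  by_cases hj : j = k
  · subst hj
    simp only [hi, or_true, if_true, if_false, hdiag, negPart_zero]
    ring
  rw [if_neg (not_or.2 ⟨hi, hj⟩), if_neg hi, if_neg hj, Int.abs_mul_add_mul_abs_ediv_two]
  ring

end MeshMut

open MeshMut in
/-- Lemma "matrix mutation": for an `n × n` integer matrix `A` with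
zero diagonal and `1 ≤ k ≤ n`, the Fomin–Zelevinsky mutation of `A` in direction `k`
satisfies `μ_k(A) = W·A·U`. -/
theorem statement_17
    (n : ℕ) (A : Matrix (Fin n) (Fin n) ℤ) (hdiag : ∀ i, A i i = 0) (k : Fin n) :
    fzMutation A k = mutW A k * A * mutU A k :=
  fzMutation_eq_mutW_mul_mul_mutU A hdiag k
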